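/- Let A, B be positive definite d×d matrices, ε > 0, and M an invertible d×d matrix. Then the matrix W = A^{1/2}(A^{1/2} M B Mᵀ A^{1/2} + (ε²/4) I_d)^{1/2} A^{-1/2} − (ε/2) I_d satisfies the quadratic matrix equation W² + εW − A M B Mᵀ = 0. -/

import Mathlib

open Matrix

open Classical in
/-- The positive semidefinite square root (zero if not positive semidefinite). -/
noncomputable def psqrt {d : ℕ} (X : Matrix (Fin d) (Fin d) ℝ) : Matrix (Fin d) (Fin d) ℝ :=
  if h : X.PosSemidef then (h.1.eigenvectorUnitary : Matrix (Fin d) (Fin d) ℝ) *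
    diagonal ((↑) ∘ (√·) ∘ h.1.eigenvalues) * (star h.1.eigenvectorUnitary : Matrix (Fin d) (Fin d) ℝ)
  else 0

/-
The equation is a completed square: for any E, `(E - (ε/2) I)² + ε (E - (ε/2) I) = E² - (ε²/4) I`,
so it suffices that `E = A^{1/2} T A^{-1/2}` with `T = (A^{1/2} X A^{1/2} + (ε²/4) I)^{1/2}` and
`X = M B Mᵀ` squares to `A X + (ε²/4) I`. Conjugating by `A^{1/2}` gives
`E² = A^{1/2} T² A^{-1/2} = A^{1/2} (A^{1/2} X A^{1/2} + (ε²/4) I) A^{-1/2} = A X + (ε²/4) I`,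
where `T² = A^{1/2} X A^{1/2} + (ε²/4) I` needs that matrix to be positive semidefinite
(otherwise `psqrt` returns `0`).
-/

theorem sub_smul_one_mul_self_add_two_mul_smul {K R : Type*} [CommRing K] [Ring R] [Algebra K R]
    (c : K) (E : R) :
    (E - c • 1) * (E - c • 1) + (2 * c) • (E - c • 1) = E * E - c ^ 2 • 1 := by
  simp only [sub_mul, mul_sub, smul_mul_assoc, mul_smul_comm, mul_one, one_mul, smul_sub, smul_smul]
  module

theorem conj_mul_self_of_mul_self_eq {n R : Type*} [Fintype n] [DecidableEq n] [CommRing R]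
    {S T X : Matrix n n R} (hS : IsUnit S.det) (c : R)
    (hT : T * T = S * X * S + c • 1) :
    (S * T * S⁻¹) * (S * T * S⁻¹) = S * S * X + c • 1 := by
  calc (S * T * S⁻¹) * (S * T * S⁻¹) = S * T * (S⁻¹ * S) * T * S⁻¹ := by
        simp only [Matrix.mul_assoc]
    _ = S * (T * T) * S⁻¹ := by
        rw [nonsing_inv_mul S hS]; simp only [Matrix.mul_assoc, Matrix.one_mul]
    _ = S * S * X * (S * S⁻¹) + c • (S * S⁻¹) := by
        rw [hT, Matrix.mul_add, Matrix.add_mul, Matrix.mul_smul, Matrix.smul_mul, Matrix.mul_one]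
        simp only [Matrix.mul_assoc]
    _ = S * S * X + c • 1 := by rw [mul_nonsing_inv S hS, Matrix.mul_one]

open scoped ComplexOrder in
theorem Matrix.PosSemidef.mul_mul_same_add_smul_one {n 𝕜 : Type*} [Fintype n] [DecidableEq n]
    [RCLike 𝕜] {S X : Matrix n n 𝕜} (hS : S.IsHermitian) (hX : X.PosSemidef) {c : 𝕜}
    (hc : 0 ≤ c) : (S * X * S + c • 1).PosSemidef := by
  have hSXS := hX.mul_mul_conjTranspose_same S
  rw [hS.eq] at hSXS
  exact hSXS.add (PosSemidef.one.smul hc)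

section Psqrt

variable {d : ℕ} {X : Matrix (Fin d) (Fin d) ℝ}

theorem psqrt_eq (h : X.PosSemidef) :
    psqrt X = (h.1.eigenvectorUnitary : Matrix (Fin d) (Fin d) ℝ) *
      diagonal ((↑) ∘ (√·) ∘ h.1.eigenvalues) *
      (star h.1.eigenvectorUnitary : Matrix (Fin d) (Fin d) ℝ) := by
  simp only [psqrt, dif_pos h]

theorem psqrt_posSemidef (h : X.PosSemidef) : (psqrt X).PosSemidef := by
  rw [psqrt_eq h, star_eq_conjTranspose]
  refine PosSemidef.mul_mul_conjTranspose_same ?_ _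
  rw [posSemidef_diagonal_iff]
  intro i
  simp [Real.sqrt_nonneg]

theorem psqrt_mul_self (h : X.PosSemidef) : psqrt X * psqrt X = X := by
  have hUU := Unitary.coe_star_mul_self h.1.eigenvectorUnitary
  have hspec := h.1.spectral_theorem
  rw [Unitary.conjStarAlgAut_apply] at hspec
  conv_rhs => rw [hspec]
  rw [psqrt_eq h]
  simp only [Matrix.mul_assoc]
  rw [← Matrix.mul_assoc _ (h.1.eigenvectorUnitary : Matrix (Fin d) (Fin d) ℝ), hUU,
    Matrix.one_mul, ← Matrix.mul_assoc (diagonal _), diagonal_mul_diagonal]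
  congr 3
  funext i
  simp [Real.mul_self_sqrt (h.eigenvalues_nonneg i)]

theorem isUnit_det_psqrt {A : Matrix (Fin d) (Fin d) ℝ} (hA : A.PosDef) : IsUnit (psqrt A).det := by
  have hdet : (psqrt A).det * (psqrt A).det = A.det := by
    rw [← det_mul, psqrt_mul_self hA.posSemidef]
  exact isUnit_iff_ne_zero.mpr fun h0 => hA.det_pos.ne' (by rw [← hdet, h0, zero_mul])

end Psqrt

theorem stmt8_general {d : ℕ} (A B M : Matrix (Fin d) (Fin d) ℝ) (hA : A.PosDef) (hB : B.PosDef)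
    (ε : ℝ)
    (W : Matrix (Fin d) (Fin d) ℝ)
    (hW : W = psqrt A * psqrt (psqrt A * (M * B * Mᵀ) * psqrt A + (ε ^ 2 / 4) • 1) *
          (psqrt A)⁻¹ - (ε / 2) • 1) :
    W * W + ε • W - A * (M * B * Mᵀ) = 0 := by
  have hX : (M * B * Mᵀ).PosSemidef := by
    simpa only [conjTranspose_eq_transpose_of_trivial] using
      hB.posSemidef.mul_mul_conjTranspose_same M
  set S := psqrt A
  set T := psqrt (S * (M * B * Mᵀ) * S + (ε ^ 2 / 4) • 1)
  have hT : T * T = S * (M * B * Mᵀ) * S + (ε ^ 2 / 4) • 1 := psqrt_mul_self <|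
    hX.mul_mul_same_add_smul_one (psqrt_posSemidef hA.posSemidef).isHermitian (by positivity)
  have hE : (S * T * S⁻¹) * (S * T * S⁻¹) = A * (M * B * Mᵀ) + (ε ^ 2 / 4) • 1 := by
    rw [conj_mul_self_of_mul_self_eq (isUnit_det_psqrt hA) _ hT, psqrt_mul_self hA.posSemidef]
  have hsq := sub_smul_one_mul_self_add_two_mul_smul (ε / 2) (S * T * S⁻¹)
  rw [mul_div_cancel₀ ε two_ne_zero, show (ε / 2) ^ 2 = ε ^ 2 / 4 by ring, hE,
    add_sub_cancel_right] at hsq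
  rw [hW, hsq, sub_self]

theorem stmt8 {d : ℕ} (A B M : Matrix (Fin d) (Fin d) ℝ) (hA : A.PosDef) (hB : B.PosDef)
    (hM : IsUnit M.det) (ε : ℝ) (hε : 0 < ε)
    (W : Matrix (Fin d) (Fin d) ℝ)
    (hW : W = psqrt A * psqrt (psqrt A * (M * B * Mᵀ) * psqrt A + (ε ^ 2 / 4) • 1) *
          (psqrt A)⁻¹ - (ε / 2) • 1) :
    W * W + ε • W - A * (M * B * Mᵀ) = 0 :=
  stmt8_general A B M hA hB ε W hW
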